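/- Let Λ : ℝ → ℂ^{2n×2n} be differentiable with Im Λ(t) := (Λ(t) − Λ(t)*)/(2i) positive definite for all t (or negative definite for all t), and let M : ℝ → ℂ^{2n×2n} be differentiable with M(t) invertible and satisfying the matrix Dyson equation −M(t)^{−1} = S[M(t)] + Λ(t) with sgn Im M(t) = sgn Im Λ(t) for all t. Assume the stability operator 1 − M(t) S[·] M(t) is invertible for all t. If Λ solves the ODE Λ'(t) = −Λ(t)/2 − S[M(t)], then M'(t) = M(t)/2 for all t. -/

import Mathlib

open MeasureTheory ProbabilityTheory Matrix Filter Finset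
open scoped Real ComplexConjugate Matrix.Norms.L2Operator

noncomputable section

namespace RMT

/-- The space of `2n × 2n` complex matrices written in `2 × 2` block form. -/
abbrev Mat (n : ℕ) := Matrix (Fin n ⊕ Fin n) (Fin n ⊕ Fin n) ℂ

/-- Normalized trace `⟨A⟩`. -/
def avgTr {m : Type*} [Fintype m] (A : Matrix m m ℂ) : ℂ :=
  (Fintype.card m : ℂ)⁻¹ * A.trace

/-- The matrix `E₋ = E₁ - E₂`. -/
def Eminus (n : ℕ) : Mat n := Matrix.fromBlocks 1 0 0 (-1)

/-- The covariance operator `S[R] = ⟨R⟩·1 - ⟨R E₋⟩·E₋`, as a linear endomorphism. -/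
def covS (n : ℕ) : Mat n →ₗ[ℂ] Mat n where
  toFun R := avgTr R • (1 : Mat n) - avgTr (R * Eminus n) • Eminus n
  map_add' R S := by
    simp only [avgTr, Matrix.add_mul, Matrix.trace_add, mul_add, add_smul]
    abel
  map_smul' c R := by
    simp only [avgTr, Matrix.smul_mul, Matrix.trace_smul, smul_eq_mul, RingHom.id_apply,
      smul_sub, smul_smul]
    congr 1 <;> · congr 1; ring

/-- The stability operator `B₁₂ = 1 - M₁ S[·] M₂`. -/
def stabEnd {n : ℕ} (M1 M2 : Mat n) : Module.End ℂ (Mat n) :=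
  LinearMap.id - ((LinearMap.mulRight ℂ M2).comp ((LinearMap.mulLeft ℂ M1).comp (covS n)))

/-- The adjoint (w.r.t. the Hilbert–Schmidt inner product) of the stability operator,
`B₁₂*[K] = K - S[M₁* K M₂*]`. -/
def adjStab {n : ℕ} (M1 M2 : Mat n) : Module.End ℂ (Mat n) :=
  LinearMap.id - ((covS n).comp ((LinearMap.mulRight ℂ M2ᴴ).comp (LinearMap.mulLeft ℂ M1ᴴ)))

/-- `M₁₂^A := B₁₂⁻¹[M₁ A M₂]`. -/
def M12 {n : ℕ} (M1 M2 A : Mat n) : Mat n := Ring.inverse (stabEnd M1 M2) (M1 * A * M2)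

/-- `m` is the solution of the scalar Dyson equation
`-1/m = iη + m - |z|²/(iη + m)` with side condition `Im m · η > 0`. -/
def IsMsc (msc : ℂ → ℝ → ℂ) : Prop :=
  ∀ (z : ℂ) (η : ℝ), η ≠ 0 →
    (-(msc z η)⁻¹ = Complex.I * η + msc z η
        - (Complex.normSq z : ℂ) / (Complex.I * η + msc z η)
      ∧ 0 < (msc z η).im * η)

/-- `u^z(iη) = iη / (iη + m^z(iη))`. -/
def usc (msc : ℂ → ℝ → ℂ) (z : ℂ) (η : ℝ) : ℂ :=
  (Complex.I * η) / (Complex.I * η + msc z η)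

/-- The deterministic approximation `M^z(iη)` of the resolvent. -/
def Mblock (msc : ℂ → ℝ → ℂ) (n : ℕ) (z : ℂ) (η : ℝ) : Mat n :=
  Matrix.fromBlocks ((msc z η) • 1) ((-(z * usc msc z η)) • 1)
    ((-((starRingEnd ℂ z) * usc msc z η)) • 1) ((msc z η) • 1)

/-- `M₁₂^A` at spectral parameters `(z₁, iη₁, z₂, iη₂)`. -/
def M12A (msc : ℂ → ℝ → ℂ) (n : ℕ) (z1 : ℂ) (η1 : ℝ) (z2 : ℂ) (η2 : ℝ) (A : Mat n) : Mat n :=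
  M12 (Mblock msc n z1 η1) (Mblock msc n z2 η2) A

/-- Hermitisation of a general (not necessarily square-symmetric) matrix. -/
def herm {n : ℕ} (X : Matrix (Fin n) (Fin n) ℂ) : Mat n := Matrix.fromBlocks 0 X Xᴴ 0

/-- Hermitisation `H^z` of `X - z`. -/
def Hz {n : ℕ} (X : Matrix (Fin n) (Fin n) ℂ) (z : ℂ) : Mat n :=
  herm (X - z • (1 : Matrix (Fin n) (Fin n) ℂ))

/-- Resolvent `G^z(iη) = (H^z - iη)⁻¹`. -/
def Gz {n : ℕ} (X : Matrix (Fin n) (Fin n) ℂ) (z : ℂ) (η : ℝ) : Mat n :=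
  (Hz X z - (Complex.I * η) • 1)⁻¹

/-- The generalized spectral parameter `Λ`. -/
def Lam (n : ℕ) (z : ℂ) (η : ℝ) : Mat n :=
  Matrix.fromBlocks ((Complex.I * η) • 1) (z • 1)
    ((starRingEnd ℂ z) • 1) ((Complex.I * η) • 1)

variable {Ω : Type*} [MeasureSpace Ω]

/-- Moment assumptions on the entry distribution `χ`. -/
structure EntryMoments (χ : Ω → ℂ) : Prop where
  meas : Measurable χ
  mean_zero : ∫ ω, χ ω = 0
  sq_zero : ∫ ω, (χ ω) ^ 2 = 0
  var_one : ∫ ω, ‖χ ω‖ ^ 2 = 1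
  moment_bound : ∀ p : ℕ, ∃ C : ℝ, ∫ ω, ‖χ ω‖ ^ p ≤ C

/-- `X` is an `n × n` i.i.d. random matrix with entries distributed as `n^{-1/2} χ`. -/
structure IsIIDMatrix (χ : Ω → ℂ) (n : ℕ) (X : Ω → Matrix (Fin n) (Fin n) ℂ) : Prop where
  meas : ∀ a b, Measurable fun ω => X ω a b
  indep : iIndepFun (m := fun _ : Fin n × Fin n => (inferInstance : MeasurableSpace ℂ))
    (fun p ω => X ω p.1 p.2) volume
  law : ∀ a b, Measure.map (fun ω => X ω a b) volume
    = Measure.map (fun ω => ((Real.sqrt n : ℝ) : ℂ)⁻¹ * χ ω) volume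

/-- The standard complex Gaussian law (mean `0`, `E|χ|² = 1`, `Eχ² = 0`). -/
def complexGaussian : Measure ℂ :=
  ((gaussianReal 0 (1/2)).prod (gaussianReal 0 (1/2))).map fun p => (p.1 : ℂ) + p.2 * Complex.I

/-- `X` is i.i.d. and `Γ` is a standard complex Ginibre matrix, with all entries of `X` and `Γ`
jointly independent. -/
structure IIDPlusGinibre (χ : Ω → ℂ) (n : ℕ) (X Γ : Ω → Matrix (Fin n) (Fin n) ℂ) : Prop where
  iid : IsIIDMatrix χ n X
  measG : ∀ a b, Measurable fun ω => Γ ω a b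
  lawG : ∀ a b, Measure.map (fun ω => Γ ω a b) volume = complexGaussian
  indepAll : iIndepFun
    (m := fun _ : (Fin n × Fin n) ⊕ (Fin n × Fin n) => (inferInstance : MeasurableSpace ℂ))
    (Sum.elim (fun p ω => X ω p.1 p.2) (fun p ω => Γ ω p.1 p.2)) volume

/-- The Ornstein–Uhlenbeck flow `dX_t = -½X_t dt + n^{-1/2} dB_t` started from `X`, realized
through its strong solution `X_t = e^{-t/2}(X + √((e^t-1)/n)·Γ)` with a Ginibre matrix `Γ`. -/
def ouFlow {n : ℕ} (X Γ : Ω → Matrix (Fin n) (Fin n) ℂ) (t : ℝ) (ω : Ω) :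
    Matrix (Fin n) (Fin n) ℂ :=
  ((Real.exp (-t / 2) : ℝ) : ℂ) •
    (X ω + ((Real.sqrt ((Real.exp t - 1) / n) : ℝ) : ℂ) • Γ ω)

/-- Laplacian of a test function on `ℂ ≅ ℝ²`. -/
def lap (f : ℂ → ℂ) (z : ℂ) : ℂ :=
  fderiv ℝ (fun w => fderiv ℝ f w 1) z 1 + fderiv ℝ (fun w => fderiv ℝ f w Complex.I) z Complex.I

/-- `|∇f|²`. -/
def gradSq (f : ℂ → ℂ) (z : ℂ) : ℝ :=
  ‖fderiv ℝ f z 1‖ ^ 2 + ‖fderiv ℝ f z Complex.I‖ ^ 2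

/-- `⟨∇g, ∇f⟩_{L²}`. -/
def gradInner (g f : ℂ → ℂ) : ℂ :=
  ∫ z : ℂ, ((starRingEnd ℂ) (fderiv ℝ g z 1) * fderiv ℝ f z 1
    + (starRingEnd ℂ) (fderiv ℝ g z Complex.I) * fderiv ℝ f z Complex.I)

/-- The mesoscopically rescaled test function `f_{z₀,a}(z) = f(nᵃ(z - z₀))`. -/
def resc (f : ℂ → ℂ) (z0 : ℂ) (a : ℝ) (n : ℕ) (z : ℂ) : ℂ :=
  f ((((n : ℝ) ^ a : ℝ) : ℂ) * (z - z0))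

/-- Linear eigenvalue statistic `∑ᵢ g(σᵢ)`, the `σᵢ` being the roots of the characteristic
polynomial (with multiplicity). -/
def eigSum {n : ℕ} (X : Matrix (Fin n) (Fin n) ℂ) (g : ℂ → ℂ) : ℂ :=
  ((X.charpoly.roots).map g).sum

/-- Centered linear statistic `L_n(g)`. -/
def Ln {n : ℕ} (X : Ω → Matrix (Fin n) (Fin n) ℂ) (g : ℂ → ℂ) (ω : Ω) : ℂ :=
  eigSum (X ω) g - ∫ ω', eigSum (X ω') g

/-- `V_{i,j}` from the resolvent CLT. -/
def Vfun (msc : ℂ → ℝ → ℂ) (z1 z2 : ℂ) (η1 η2 : ℝ) : ℂ :=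
  (1 / 2 : ℂ) * deriv (fun s : ℝ => deriv (fun t : ℝ =>
    Complex.log (1
      + (usc msc z1 s * usc msc z2 t * ((‖z1‖ : ℝ) : ℂ) * ((‖z2‖ : ℝ) : ℂ)) ^ 2
      - (msc z1 s) ^ 2 * (msc z2 t) ^ 2
      - 2 * usc msc z1 s * usc msc z2 t * ((z1 * (starRingEnd ℂ) z2).re : ℂ))) η2) η1

/-- `U_i` from the resolvent CLT. -/
def Ufun (msc : ℂ → ℝ → ℂ) (z : ℂ) (η : ℝ) : ℂ :=
  (Complex.I / (Real.sqrt 2 : ℂ)) * deriv (fun t : ℝ => (msc z t) ^ 2) η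

/-- A pairing of `[p]`, encoded as a fixed-point-free involution. -/
def IsPairing {p : ℕ} (f : Fin p → Fin p) : Prop :=
  Function.Involutive f ∧ ∀ i, f i ≠ i

open scoped Classical in
/-- `∑_{P ∈ Π_p} ∏_{{i,j} ∈ P} F i j`. -/
def pairingSum (p : ℕ) (F : Fin p → Fin p → ℂ) : ℂ :=
  ∑ f : Fin p → Fin p, if IsPairing f then
    ∏ i ∈ Finset.univ.filter fun i => i < f i, F i (f i) else 0

/-- A measure on `ℂ` is a centered complex Gaussian law iff it is the image of the standard
two-dimensional real Gaussian under a real-linear map `ℝ² → ℂ`. -/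
def IsCenteredComplexGaussian (μ : Measure ℂ) : Prop :=
  ∃ a b : ℂ, μ = Measure.map (fun p : ℝ × ℝ => a * p.1 + b * p.2)
    ((gaussianReal 0 1).prod (gaussianReal 0 1))

/-- `Im` of a matrix: `(A - A*)/(2i)`. -/
def imPart {n : ℕ} (A : Mat n) : Mat n := (2 * Complex.I)⁻¹ • (A - Aᴴ)

end RMT

/-!
Write `F := S[M] + Λ`. The Dyson equation says `M F = -1`, so differentiating gives
`M' = M F' M`. Along the characteristic flow, eliminating `Λ = -M⁻¹ - S[M]` turns this into
`M' - M S[M'] M = M/2 - M S[M/2] M`, i.e. `B[M'] = B[M/2]` for the stability operator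
`B = 1 - M S[·] M`, and invertibility of `B` gives `M' = M/2`.
-/

theorem HasDerivAt.mul_add_mul_eq_zero_of_mul_eq_const {𝔸 : Type*} [NormedRing 𝔸]
    [NormedAlgebra ℝ 𝔸] {f g : ℝ → 𝔸} {f' g' c : 𝔸} {t : ℝ} (hf : HasDerivAt f f' t)
    (hg : HasDerivAt g g' t) (hfg : ∀ s, f s * g s = c) : f' * g t + f t * g' = 0 := by
  have hconst : f * g = fun _ => c := funext hfg
  exact (hf.mul hg).unique (hconst ▸ hasDerivAt_const t c)

theorem eq_mul_mul_of_mul_add_mul_eq_zero {R : Type*} [Ring R] {m m' g g' : R}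
    (hgm : g * m = -1) (h : m' * g + m * g' = 0) : m' = m * g' * m := by
  have hm'g : m' * g = -(m * g') := eq_neg_of_add_eq_zero_left h
  calc m' = -(m' * g * m) := by rw [mul_assoc, hgm, mul_neg_one, neg_neg]
    _ = m * g' * m := by rw [hm'g, neg_mul, neg_neg]

namespace RMT

variable {n : ℕ}

theorem stabEnd_apply (M1 M2 X : Mat n) : stabEnd M1 M2 X = X - M1 * covS n X * M2 := rfl

theorem stabEnd_eq_stabEnd_half_of_eq_mul_mul {M Md Λ : Mat n} (hM : IsUnit M)
    (hΛ : Λ = -M⁻¹ - covS n M)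
    (hMd : Md = M * (covS n Md + (-((1 / 2 : ℂ) • Λ) - covS n M)) * M) :
    stabEnd M M Md = stabEnd M M ((1 / 2 : ℂ) • M) := by
  have hMMM : M * M⁻¹ * M = M := by
    rw [mul_nonsing_inv _ ((isUnit_iff_isUnit_det M).mp hM), one_mul]
  rw [stabEnd_apply, stabEnd_apply, map_smul]
  -- freeze `S[Md]` so that rewriting with `hMd` does not also act inside it
  generalize covS n Md = SMd at hMd ⊢
  rw [hMd, hΛ]
  simp only [mul_add, add_mul, mul_sub, sub_mul, mul_neg, neg_mul, smul_sub, smul_neg,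
    mul_smul_comm, smul_mul_assoc, hMMM]
  module

end RMT

open scoped ComplexOrder in
open RMT in
theorem statement18_general (n : ℕ)
    (Λ M Md : ℝ → Mat n)
    (hMinv : ∀ t : ℝ, IsUnit (M t))
    (hMDE : ∀ t : ℝ, -(M t)⁻¹ = (covS n) (M t) + Λ t)
    (hstab : ∀ t : ℝ, IsUnit (stabEnd (M t) (M t)))
    (hΛ : ∀ t : ℝ, HasDerivAt Λ (-((1 / 2 : ℂ) • Λ t) - (covS n) (M t)) t)
    (hM : ∀ t : ℝ, HasDerivAt M (Md t) t) :
    ∀ t : ℝ, Md t = (1 / 2 : ℂ) • M t := by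
  intro t
  have hdet : ∀ s, IsUnit (M s).det := fun s => (isUnit_iff_isUnit_det _).mp (hMinv s)
  have hF : HasDerivAt (fun s => covS n (M s) + Λ s)
      (covS n (Md t) + (-((1 / 2 : ℂ) • Λ t) - covS n (M t))) t :=
    (((covS n).toContinuousLinearMap.restrictScalars ℝ).hasFDerivAt.comp_hasDerivAt t
      (hM t)).add (hΛ t)
  have hMF : ∀ s, M s * (covS n (M s) + Λ s) = -1 := fun s => by
    rw [← hMDE s, mul_neg, mul_nonsing_inv _ (hdet s)]
  have hFM : (covS n (M t) + Λ t) * M t = -1 := by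
    rw [← hMDE t, neg_mul, nonsing_inv_mul _ (hdet t)]
  have hMd := eq_mul_mul_of_mul_add_mul_eq_zero hFM
    ((hM t).mul_add_mul_eq_zero_of_mul_eq_const hF hMF)
  apply ((Module.End.isUnit_iff _).mp (hstab t)).injective
  exact stabEnd_eq_stabEnd_half_of_eq_mul_mul (hMinv t) (by rw [hMDE t]; abel) hMd

open scoped ComplexOrder in
open RMT in
/-- along the (matrix) characteristic flow `Λ' = -Λ/2 - S[M]`, the solution of the
matrix Dyson equation satisfies `M' = M/2`. -/
theorem statement18 (n : ℕ)
    (Λ M Md : ℝ → Mat n)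
    (hΛdef : (∀ t : ℝ, (imPart (Λ t)).PosDef) ∨ (∀ t : ℝ, (-(imPart (Λ t))).PosDef))
    (hMinv : ∀ t : ℝ, IsUnit (M t))
    (hMDE : ∀ t : ℝ, -(M t)⁻¹ = (covS n) (M t) + Λ t)
    (hMsign : ∀ t : ℝ,
      ((imPart (Λ t)).PosDef → (imPart (M t)).PosDef) ∧
      ((-(imPart (Λ t))).PosDef → (-(imPart (M t))).PosDef))
    (hstab : ∀ t : ℝ, IsUnit (stabEnd (M t) (M t)))
    (hΛ : ∀ t : ℝ, HasDerivAt Λ (-((1 / 2 : ℂ) • Λ t) - (covS n) (M t)) t)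
    (hM : ∀ t : ℝ, HasDerivAt M (Md t) t) :
    ∀ t : ℝ, Md t = (1 / 2 : ℂ) • M t :=
  statement18_general n Λ M Md hMinv hMDE hstab hΛ hM
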